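/- Let X = exp(x)∂_y and H = ∂_x in V(ℂ²), and let d ∈ ℂ. If a vector field V = exp(dx)(f(y)∂_x + g(y)∂_y), with f, g entire, satisfies [X,V] = 0, then there exist constants κ, ℓ ∈ ℂ such that V = exp(dx)(κ∂_x + (κy + ℓ)∂_y). -/

import Mathlib

open Complex Module Set

set_option synthInstance.maxHeartbeats 1000000
set_option maxHeartbeats 1000000

noncomputable section

/-- The algebra of entire (holomorphic) functions on `ℂ²`. -/
def Entire : Subalgebra ℂ (ℂ × ℂ → ℂ) where
  carrier := {f | AnalyticOnNhd ℂ f Set.univ}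
  mul_mem' hf hg := hf.mul hg
  add_mem' hf hg := hf.add hg
  one_mem' := analyticOnNhd_const
  zero_mem' := analyticOnNhd_const
  algebraMap_mem' _ := analyticOnNhd_const

/-- The Lie algebra `V(ℂ²)` of holomorphic vector fields on `ℂ²`, i.e. derivations
`F(x,y)∂ₓ + G(x,y)∂_y` of the ℂ-algebra of entire functions on `ℂ²`, with bracket the
commutator of derivations. -/
abbrev VF := Derivation ℂ Entire Entire

instance (M : Submodule ℂ VF) : AddCommGroup ↥M := @Submodule.addCommGroup ℂ VF _ _ _ M

/- Shortcut instances, to speed up elaboration. -/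
@[reducible] instance (priority := 10000) : AddCommMonoid Entire := inferInstance
instance (priority := 10000) : SMulCommClass ℂ Entire Entire := inferInstance
@[reducible] instance (priority := 10000) : SMul Entire VF := inferInstance
@[reducible] instance (priority := 10000) : SMul ℂ VF := inferInstance
@[reducible] instance (priority := 10000) : LieRing VF := inferInstance
@[reducible] instance (priority := 10000) : AddCommGroup VF := inferInstance

theorem Entire.diffAt (f : Entire) (p : ℂ × ℂ) : DifferentiableAt ℂ (f : ℂ × ℂ → ℂ) p :=
  (f.2 p trivial).differentiableAt

theorem Entire.fderiv_mem {f : ℂ × ℂ → ℂ} (hf : f ∈ Entire) (v : ℂ × ℂ) :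
    (fun p => fderiv ℂ f p v) ∈ Entire := fun p _ =>
  ((ContinuousLinearMap.apply ℂ ℂ v).analyticAt _).comp ((hf.fderiv) p trivial)

/-- The constant-coefficient vector field in the direction `v`. -/
def Dvec (v : ℂ × ℂ) : VF where
  toFun f := ⟨fun p => fderiv ℂ (f : ℂ × ℂ → ℂ) p v, Entire.fderiv_mem f.2 v⟩
  map_add' f g := Subtype.ext <| funext fun p => by
    show fderiv ℂ ((f : ℂ × ℂ → ℂ) + (g : ℂ × ℂ → ℂ)) p v = _
    rw [fderiv_add (Entire.diffAt f p) (Entire.diffAt g p)]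
    rfl
  map_smul' c f := Subtype.ext <| funext fun p => by
    show fderiv ℂ (c • (f : ℂ × ℂ → ℂ)) p v = _
    rw [fderiv_const_smul (Entire.diffAt f p) c]
    rfl
  map_one_eq_zero' := Subtype.ext <| funext fun p => by
    show fderiv ℂ (fun _ => (1 : ℂ)) p v = 0
    rw [fderiv_const_apply]
    rfl
  leibniz' f g := Subtype.ext <| funext fun p => by
    show fderiv ℂ (fun q => (f : ℂ × ℂ → ℂ) q * (g : ℂ × ℂ → ℂ) q) p v = _
    rw [fderiv_fun_mul (Entire.diffAt f p) (Entire.diffAt g p)]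
    show (f : ℂ × ℂ → ℂ) p • fderiv ℂ (g : ℂ × ℂ → ℂ) p v
      + (g : ℂ × ℂ → ℂ) p • fderiv ℂ (f : ℂ × ℂ → ℂ) p v = _
    rfl

/-- The coordinate vector field `∂ₓ`. -/
def Dx : VF := Dvec (1, 0)

/-- The coordinate vector field `∂_y`. -/
def Dy : VF := Dvec (0, 1)

/-- The entire function `exp (c·x)`. -/
def ex (c : ℂ) : Entire :=
  ⟨fun p => Complex.exp (c * p.1), fun p _ =>
    analyticAt_cexp.comp ((analyticAt_const (v := c)).mul (analyticAt_fst (p := p)))⟩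

/-- The entire function `y` (the second coordinate). -/
def yc : Entire := ⟨fun p => p.2, fun _ _ => analyticAt_snd⟩

/-- The entire function `f(y)` built from an entire function `f` of one variable. -/
def ofY (f : ℂ → ℂ) (hf : AnalyticOnNhd ℂ f Set.univ) : Entire :=
  ⟨fun p => f p.2, fun p _ => (hf p.2 trivial).comp analyticAt_snd⟩

/-- `X = exp(x)∂_y`, the first generator of the type (II) realization of `sl(2,ℂ)`. -/
def Xb : VF := ex 1 • Dy

/-- `Y = exp(−x)(y∂ₓ + (y²/2 + ε)∂_y)`, the second generator of the type (II)_ε realization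
of `sl(2,ℂ)`. -/
def Yb (ε : ℂ) : VF :=
  (ex (-1) * yc) • Dx + (ex (-1) * (((1 : ℂ) / 2) • yc ^ 2 + algebraMap ℂ Entire ε)) • Dy

/-- The type (II)_ε realization of `sl(2,ℂ)` in `V(ℂ²)`: the span of `X = exp(x)∂_y`,
`Y = exp(−x)(y∂ₓ + (y²/2 + ε)∂_y)` and `H = [X,Y]`. -/
def typeII (ε : ℂ) : LieSubalgebra ℂ VF := LieSubalgebra.lieSpan ℂ VF {Xb, Yb ε, ⁅Xb, Yb ε⁆}

/-- `H = [X,Y]` for the type (II)_ε realization. -/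
def Hb (ε : ℂ) : VF := ⁅Xb, Yb ε⁆

/-- The vector field `W = ∂ₓ + y∂_y`. -/
def Wvf : VF := Dx + yc • Dy

/-- The vector field `exp(dx)(∂ₓ + y∂_y)`. -/
def Vvf (d : ℂ) : VF := ex d • (Dx + yc • Dy)

/-- The vector field `exp(dx)∂_y`. -/
def Evf (d : ℂ) : VF := ex d • Dy

/-- The vector field `exp(dx)(∂ₓ + (y + ℓ)∂_y)`. -/
def Vlvf (d l : ℂ) : VF := ex d • (Dx + (yc + algebraMap ℂ Entire l) • Dy)


/-
Write `V = a ∂ₓ + b ∂_y` with `a = exp(dx) f(y)`, `b = exp(dx) g(y)`. Evaluating `[X, V]` on the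
coordinate functions gives `[X, V] x = eˣ ∂_y a` and `[X, V] y = eˣ (∂_y b - a)`. Since exponentials
are units of the algebra of entire functions, `[X, V] = 0` forces `f' = 0` and `g' = f`, so `f = κ`
is constant and `g = κy + ℓ`.
-/

theorem eq_mul_add_of_deriv_eq_const {𝕜 : Type*} [RCLike 𝕜] {g : 𝕜 → 𝕜} {κ : 𝕜}
    (hg : Differentiable 𝕜 g) (h : ∀ y, deriv g y = κ) (y : 𝕜) : g y = κ * y + g 0 := by
  have hdiff : Differentiable 𝕜 fun y => g y - κ * y := hg.sub (differentiable_id.const_mul κ)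
  have hderiv : ∀ y, deriv (fun y => g y - κ * y) y = 0 := fun y => by
    rw [((hg y).hasDerivAt.fun_sub ((hasDerivAt_id' y).const_mul κ)).deriv, h y]
    ring
  have := is_const_of_deriv_eq_zero hdiff hderiv y 0
  rw [mul_zero, sub_zero] at this
  linear_combination this

def xc : Entire := ⟨fun p => p.1, fun _ _ => analyticAt_fst⟩

lemma ex_mul_ex_neg (c : ℂ) : ex c * ex (-c) = 1 := Subtype.ext <| funext fun p => by
  show Complex.exp (c * p.1) * Complex.exp (-c * p.1) = 1
  rw [← Complex.exp_add, neg_mul, add_neg_cancel, Complex.exp_zero]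

lemma isUnit_ex (c : ℂ) : IsUnit (ex c) := .of_mul_eq_one _ (ex_mul_ex_neg c)

lemma ofY_injective {f g : ℂ → ℂ} {hf : AnalyticOnNhd ℂ f Set.univ}
    {hg : AnalyticOnNhd ℂ g Set.univ} (h : ofY f hf = ofY g hg) : f = g :=
  funext fun y => congrFun (congrArg Subtype.val h) (0, y)

lemma Dx_xc : Dx xc = 1 := Subtype.ext <| funext fun p => by
  show fderiv ℂ (fun q : ℂ × ℂ => q.1) p (1, 0) = 1
  rw [fderiv_fst]; rfl

lemma Dy_xc : Dy xc = 0 := Subtype.ext <| funext fun p => by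
  show fderiv ℂ (fun q : ℂ × ℂ => q.1) p (0, 1) = 0
  rw [fderiv_fst]; rfl

lemma Dx_yc : Dx yc = 0 := Subtype.ext <| funext fun p => by
  show fderiv ℂ (fun q : ℂ × ℂ => q.2) p (1, 0) = 0
  rw [fderiv_snd]; rfl

lemma Dy_yc : Dy yc = 1 := Subtype.ext <| funext fun p => by
  show fderiv ℂ (fun q : ℂ × ℂ => q.2) p (0, 1) = 1
  rw [fderiv_snd]; rfl

lemma hasFDerivAt_ofY (f : ℂ → ℂ) (hf : AnalyticOnNhd ℂ f Set.univ) (p : ℂ × ℂ) :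
    HasFDerivAt (fun q : ℂ × ℂ => f q.2) (deriv f p.2 • ContinuousLinearMap.snd ℂ ℂ ℂ) p := by
  refine ((hf p.2 trivial).differentiableAt.hasDerivAt.hasFDerivAt.comp p
    hasFDerivAt_snd).congr_fderiv (ContinuousLinearMap.ext fun v => ?_)
  simp [mul_comm]

lemma Dy_ofY (f : ℂ → ℂ) (hf : AnalyticOnNhd ℂ f Set.univ) :
    Dy (ofY f hf) = ofY (deriv f) hf.deriv := Subtype.ext <| funext fun p => by
  show fderiv ℂ (fun q : ℂ × ℂ => f q.2) p (0, 1) = deriv f p.2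
  rw [(hasFDerivAt_ofY f hf p).fderiv]
  simp

lemma hasFDerivAt_ex (c : ℂ) (p : ℂ × ℂ) :
    HasFDerivAt (fun q : ℂ × ℂ => Complex.exp (c * q.1))
      (Complex.exp (c * p.1) • c • ContinuousLinearMap.fst ℂ ℂ ℂ) p :=
  (hasFDerivAt_fst.const_smul c).cexp

lemma Dx_ex (c : ℂ) : Dx (ex c) = c • ex c := Subtype.ext <| funext fun p => by
  show fderiv ℂ (fun q : ℂ × ℂ => Complex.exp (c * q.1)) p (1, 0) = c * Complex.exp (c * p.1)
  rw [(hasFDerivAt_ex c p).fderiv]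
  simp [mul_comm]

lemma Dy_ex (c : ℂ) : Dy (ex c) = 0 := Subtype.ext <| funext fun p => by
  show fderiv ℂ (fun q : ℂ × ℂ => Complex.exp (c * q.1)) p (0, 1) = 0
  rw [(hasFDerivAt_ex c p).fderiv]
  simp

lemma Dy_ex_mul_ofY (c : ℂ) (f : ℂ → ℂ) (hf : AnalyticOnNhd ℂ f Set.univ) :
    Dy (ex c * ofY f hf) = ex c * ofY (deriv f) hf.deriv := by
  rw [Derivation.leibniz, Dy_ex, Dy_ofY, smul_zero, add_zero, smul_eq_mul]

section Components

variable (a b : Entire)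

lemma smul_Dx_add_smul_Dy_apply_xc : (a • Dx + b • Dy) xc = a := by
  show a • Dx xc + b • Dy xc = a
  rw [Dx_xc, Dy_xc, smul_zero, add_zero, smul_eq_mul, mul_one]

lemma smul_Dx_add_smul_Dy_apply_yc : (a • Dx + b • Dy) yc = b := by
  show a • Dx yc + b • Dy yc = b
  rw [Dx_yc, Dy_yc, smul_zero, zero_add, smul_eq_mul, mul_one]

lemma smul_Dx_add_smul_Dy_apply_ex (c : ℂ) : (a • Dx + b • Dy) (ex c) = c • a * ex c := by
  show a • Dx (ex c) + b • Dy (ex c) = _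
  rw [Dx_ex, Dy_ex, smul_zero, add_zero, smul_eq_mul, mul_smul_comm, smul_mul_assoc]

lemma Xb_apply (F : Entire) : Xb F = ex 1 * Dy F := rfl

lemma lie_Xb_apply_xc : ⁅Xb, a • Dx + b • Dy⁆ xc = ex 1 * Dy a := by
  rw [Derivation.commutator_apply, smul_Dx_add_smul_Dy_apply_xc, Xb_apply, Xb_apply, Dy_xc,
    mul_zero, map_zero, sub_zero]

lemma lie_Xb_apply_yc : ⁅Xb, a • Dx + b • Dy⁆ yc = ex 1 * (Dy b - a) := by
  rw [Derivation.commutator_apply, smul_Dx_add_smul_Dy_apply_yc, Xb_apply, Xb_apply, Dy_yc,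
    mul_one, smul_Dx_add_smul_Dy_apply_ex, one_smul]
  ring

end Components

/-- If `V = exp(dx)(f(y)∂ₓ + g(y)∂_y)` commutes with `X = exp(x)∂_y`, then
`V = exp(dx)(κ∂ₓ + (κy + ℓ)∂_y)` for some constants `κ, ℓ ∈ ℂ`. -/
theorem statement_7 (d : ℂ) (f g : ℂ → ℂ) (hf : AnalyticOnNhd ℂ f Set.univ)
    (hg : AnalyticOnNhd ℂ g Set.univ)
    (h : ⁅Xb, (ex d * ofY f hf) • Dx + (ex d * ofY g hg) • Dy⁆ = 0) :
    ∃ κ ℓ : ℂ, (ex d * ofY f hf) • Dx + (ex d * ofY g hg) • Dy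
      = (ex d * algebraMap ℂ Entire κ) • Dx
        + (ex d * (κ • yc + algebraMap ℂ Entire ℓ)) • Dy := by
  have hx := lie_Xb_apply_xc (ex d * ofY f hf) (ex d * ofY g hg)
  have hy := lie_Xb_apply_yc (ex d * ofY f hf) (ex d * ofY g hg)
  rw [h, Derivation.zero_apply, eq_comm, (isUnit_ex 1).mul_right_eq_zero, Dy_ex_mul_ofY] at hx hy
  rw [(isUnit_ex d).mul_right_eq_zero] at hx
  rw [sub_eq_zero] at hy
  have hf' : deriv f = 0 := ofY_injective (hg := analyticOnNhd_const) hx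
  have hg' : deriv g = f := ofY_injective ((isUnit_ex d).mul_left_cancel hy)
  have hfc (y : ℂ) : f y = f 0 :=
    is_const_of_deriv_eq_zero (differentiableOn_univ.mp hf.differentiableOn) (congrFun hf') y 0
  have hgc : ∀ y, g y = f 0 * y + g 0 :=
    eq_mul_add_of_deriv_eq_const (differentiableOn_univ.mp hg.differentiableOn) fun y => by
      rw [hg', hfc]
  have hf_const : ofY f hf = algebraMap ℂ Entire (f 0) := Subtype.ext <| funext fun p => hfc p.2
  have hg_affine : ofY g hg = f 0 • yc + algebraMap ℂ Entire (g 0) :=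
    Subtype.ext <| funext fun p => hgc p.2
  exact ⟨f 0, g 0, by rw [hf_const, hg_affine]⟩
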